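/- arXiv:math/0606682 — 2 statements merged into one kernel-verified Lean document; each statement's English description precedes it below -/
import Mathlib

section
/- Let p be a prime and N ≥ 1. In the quotient ring R = (ZMod p)[x_0, …, x_{N−1}] / (x_0^p, …, x_{N−1}^p), for each natural number a < p^N define m(a) = ∏_{i<N} (a_i!)⁻¹ · x_i^{a_i}, where a_i = (a / p^i) mod p are the base-p digits of a (each a_i! is a unit in ZMod p since a_i < p). Then for all a, b < p^N one has m(a) · m(b) = (C(a+b, a) mod p) · m((a+b) mod p^N). -/
open Finset MvPolynomial

-- Lucas, ZMod form
lemma lucas_zmod {p : ℕ} (hp : p.Prime) (n k : ℕ) :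
    ((n.choose k : ZMod p)) =
      ((n % p).choose (k % p) : ZMod p) * ((n / p).choose (k / p) : ZMod p) := by
  haveI : Fact p.Prime := ⟨hp⟩
  have h := @Choose.choose_modEq_choose_mod_mul_choose_div_nat n k p _
  have h2 := (ZMod.natCast_eq_natCast_iff _ _ _).mpr h
  push_cast at h2
  exact h2

lemma choose_digit_zero {p : ℕ} (hp : p.Prime) :
    ∀ i a b : ℕ, p ≤ a / p ^ i % p + b / p ^ i % p → ((a + b).choose a : ZMod p) = 0 := by
  intro i
  induction i with
  | zero =>
    intro a b h
    simp only [pow_zero, Nat.div_one] at h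
    rw [lucas_zmod hp]
    have h1 : (a + b) % p + p = a % p + b % p := Nat.add_mod_add_of_le_add_mod h
    have hb := Nat.mod_lt b hp.pos
    have h2 : (a + b) % p < a % p := by omega
    rw [Nat.choose_eq_zero_of_lt h2]
    simp
  | succ i ih =>
    intro a b h
    rw [lucas_zmod hp]
    by_cases hc : a % p + b % p < p
    · rw [Nat.add_div_eq_of_add_mod_lt hc]
      have hd : (a / p) / p ^ i % p + (b / p) / p ^ i % p = a / p ^ (i + 1) % p + b / p ^ (i + 1) % p := by
        rw [Nat.div_div_eq_div_mul, Nat.div_div_eq_div_mul, ← pow_succ']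
      rw [ih (a / p) (b / p) (by rw [hd]; exact h)]
      simp
    · push_neg at hc
      have h1 : (a + b) % p + p = a % p + b % p := Nat.add_mod_add_of_le_add_mod hc
      have hb := Nat.mod_lt b hp.pos
      have h2 : (a + b) % p < a % p := by omega
      rw [Nat.choose_eq_zero_of_lt h2]
      simp

lemma nocarry_mod {p : ℕ} (hp : p.Prime) :
    ∀ (i a b : ℕ), (∀ j, a / p ^ j % p + b / p ^ j % p < p) →
      a % p ^ i + b % p ^ i < p ^ i := by
  intro i
  induction i with
  | zero => intro a b _; simp [Nat.mod_one]
  | succ i ih =>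
    intro a b h
    have ea : a % p ^ (i + 1) = p * (a / p % p ^ i) + a % p := by
      conv_lhs => rw [← Nat.div_add_mod (a % p ^ (i + 1)) p]
      rw [pow_succ', Nat.mod_mul_right_div_self, Nat.mod_mod_of_dvd a ⟨p ^ i, rfl⟩]
    have eb : b % p ^ (i + 1) = p * (b / p % p ^ i) + b % p := by
      conv_lhs => rw [← Nat.div_add_mod (b % p ^ (i + 1)) p]
      rw [pow_succ', Nat.mod_mul_right_div_self, Nat.mod_mod_of_dvd b ⟨p ^ i, rfl⟩]
    have hih : a / p % p ^ i + b / p % p ^ i < p ^ i := by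
      apply ih
      intro j
      have := h (j + 1)
      rwa [pow_succ', ← Nat.div_div_eq_div_mul, ← Nat.div_div_eq_div_mul] at this
    have h0 : a % p + b % p < p := by
      have := h 0; simpa using this
    have key : p * (a / p % p ^ i + b / p % p ^ i) + p ≤ p * p ^ i :=
      calc p * (a / p % p ^ i + b / p % p ^ i) + p
          = p * (a / p % p ^ i + b / p % p ^ i + 1) := by ring
        _ ≤ p * p ^ i := Nat.mul_le_mul_left p hih
    rw [ea, eb, pow_succ']
    have expand : p * (a / p % p ^ i) + a % p + (p * (b / p % p ^ i) + b % p)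
        = p * (a / p % p ^ i + b / p % p ^ i) + (a % p + b % p) := by ring
    omega

lemma digit_add {p : ℕ} (hp : p.Prime) (a b i : ℕ)
    (h : ∀ j, a / p ^ j % p + b / p ^ j % p < p) :
    (a + b) / p ^ i % p = a / p ^ i % p + b / p ^ i % p := by
  have hmod : a % p ^ i + b % p ^ i < p ^ i := nocarry_mod hp i a b h
  rw [Nat.add_div_eq_of_add_mod_lt hmod]
  exact Nat.add_mod_of_add_mod_lt (h i)

lemma choose_prod {p : ℕ} (hp : p.Prime) :
    ∀ (N a b : ℕ), a < p ^ N → b < p ^ N →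
      (∀ j, a / p ^ j % p + b / p ^ j % p < p) →
      ((a + b).choose a : ZMod p) =
        ∏ i ∈ range N, ((a / p ^ i % p + b / p ^ i % p).choose (a / p ^ i % p) : ZMod p) := by
  intro N
  induction N with
  | zero =>
    intro a b ha hb _
    simp only [pow_zero, Nat.lt_one_iff] at ha hb
    subst ha; subst hb; simp
  | succ N ih =>
    intro a b ha hb h
    have h0 : a % p + b % p < p := by have := h 0; simpa using this
    rw [lucas_zmod hp, Nat.add_mod_of_add_mod_lt h0, Nat.add_div_eq_of_add_mod_lt h0]
    have hap : a / p < p ^ N := by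
      rw [Nat.div_lt_iff_lt_mul hp.pos, ← pow_succ]; exact ha
    have hbp : b / p < p ^ N := by
      rw [Nat.div_lt_iff_lt_mul hp.pos, ← pow_succ]; exact hb
    have hdig : ∀ j, a / p / p ^ j % p + b / p / p ^ j % p < p := by
      intro j
      rw [Nat.div_div_eq_div_mul, Nat.div_div_eq_div_mul, ← pow_succ']
      exact h (j + 1)
    rw [ih (a / p) (b / p) hap hbp hdig]
    rw [Finset.prod_range_succ', mul_comm]
    congr 1
    · apply Finset.prod_congr rfl
      intro j _
      rw [Nat.div_div_eq_div_mul, Nat.div_div_eq_div_mul, ← pow_succ']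
    · simp

lemma fact_inv_eq {p : ℕ} (hp : p.Prime) (x y : ℕ) (hxy : x + y < p) :
    ((x.factorial : ZMod p))⁻¹ * ((y.factorial : ZMod p))⁻¹ =
      ((x + y).choose x : ZMod p) * (((x + y).factorial : ZMod p))⁻¹ := by
  haveI : Fact p.Prime := ⟨hp⟩
  have hfac : ∀ n : ℕ, n < p → ((n.factorial : ZMod p)) ≠ 0 := by
    intro n hn hz
    rw [ZMod.natCast_eq_zero_iff] at hz
    exact absurd (hp.dvd_factorial.mp hz) (by omega)
  have hx := hfac x (by omega)
  have hy := hfac y (by omega)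
  have hs := hfac (x + y) hxy
  have key : ((x + y).choose x : ZMod p) * (x.factorial : ZMod p) * (y.factorial : ZMod p)
      = ((x + y).factorial : ZMod p) := by
    have keyn : (x + y).choose x * x.factorial * y.factorial = (x + y).factorial := by
      have := Nat.choose_mul_factorial_mul_factorial (Nat.le_add_right x y)
      simpa using this
    exact_mod_cast congrArg (Nat.cast : ℕ → ZMod p) keyn
  field_simp
  linear_combination -key



/-- The ideal `(x_0^p, …, x_{N-1}^p)` in the polynomial ring `(ZMod p)[x_0, …, x_{N-1}]`. -/
noncomputable abbrev truncIdeal (p N : ℕ) : Ideal (MvPolynomial (Fin N) (ZMod p)) :=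
  Ideal.span (Set.range fun i : Fin N => (MvPolynomial.X i : MvPolynomial (Fin N) (ZMod p)) ^ p)

/-- The truncated polynomial ring `R = (ZMod p)[x_0, …, x_{N-1}] / (x_0^p, …, x_{N-1}^p)`. -/
noncomputable abbrev TruncPolyRing (p N : ℕ) : Type :=
  MvPolynomial (Fin N) (ZMod p) ⧸ truncIdeal p N

/-- For `a < p^N` with base-`p` digits `a_i = (a / p^i) % p`, the element
`m(a) = ∏_{i<N} (a_i!)⁻¹ · x_i^{a_i}` of the truncated polynomial ring. -/
noncomputable def divMono (p N : ℕ) (a : ℕ) : TruncPolyRing p N :=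
  Ideal.Quotient.mk (truncIdeal p N)
    (∏ i : Fin N,
      MvPolynomial.C (((a / p ^ (i : ℕ) % p).factorial : ZMod p))⁻¹ *
        MvPolynomial.X i ^ (a / p ^ (i : ℕ) % p))

/-- In `R = (ZMod p)[x_0, …, x_{N-1}] / (x_0^p, …, x_{N-1}^p)`, the divided monomials
`m(a)`, for `a < p^N`, multiply by the rule
`m(a) · m(b) = (C(a+b, a) mod p) · m((a+b) mod p^N)`. -/
theorem divMono_mul (p N : ℕ) (hp : p.Prime) (hN : 1 ≤ N) (a b : ℕ)
    (ha : a < p ^ N) (hb : b < p ^ N) :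
    divMono p N a * divMono p N b =
      (((a + b).choose a : ZMod p)) • divMono p N ((a + b) % p ^ N) := by
  haveI : Fact p.Prime := ⟨hp⟩
  by_cases hcar : ∀ i, i < N → a / p ^ i % p + b / p ^ i % p < p
  · -- no carries
    have hall : ∀ j, a / p ^ j % p + b / p ^ j % p < p := by
      intro j
      by_cases hj : j < N
      · exact hcar j hj
      · have hle : p ^ N ≤ p ^ j := Nat.pow_le_pow_right hp.pos (le_of_not_gt hj)
        rw [Nat.div_eq_of_lt (lt_of_lt_of_le ha hle), Nat.div_eq_of_lt (lt_of_lt_of_le hb hle)]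
        simpa using hp.pos
    have hsum : a + b < p ^ N := by
      have h := nocarry_mod hp N a b hall
      rwa [Nat.mod_eq_of_lt ha, Nat.mod_eq_of_lt hb] at h
    rw [Nat.mod_eq_of_lt hsum]
    unfold divMono
    rw [← map_mul]
    have hsmul : ∀ (c : ZMod p) (P : MvPolynomial (Fin N) (ZMod p)),
        c • Ideal.Quotient.mk (truncIdeal p N) P
          = Ideal.Quotient.mk (truncIdeal p N) (MvPolynomial.C c * P) := by
      intro c P
      rw [← MvPolynomial.smul_eq_C_mul]
      rfl
    rw [hsmul]
    congr 1
    rw [choose_prod hp N a b ha hb hall, ← Fin.prod_univ_eq_prod_range, ← Finset.prod_mul_distrib,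
      map_prod, ← Finset.prod_mul_distrib]
    apply Finset.prod_congr rfl
    intro i _
    rw [digit_add hp a b (i : ℕ) hall, mul_mul_mul_comm, ← pow_add, ← map_mul,
      fact_inv_eq hp _ _ (hall (i : ℕ)), map_mul, mul_assoc]
  · -- carry: both sides vanish
    push_neg at hcar
    obtain ⟨i, hiN, hge⟩ := hcar
    rw [choose_digit_zero hp i a b hge, zero_smul]
    unfold divMono
    rw [← map_mul, Ideal.Quotient.eq_zero_iff_mem, ← Finset.prod_mul_distrib]
    rw [← Finset.mul_prod_erase _ _ (Finset.mem_univ (⟨i, hiN⟩ : Fin N))]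
    apply Ideal.mul_mem_right
    have hmem : (MvPolynomial.X (⟨i, hiN⟩ : Fin N) : MvPolynomial (Fin N) (ZMod p)) ^ p
        ∈ truncIdeal p N := Ideal.subset_span ⟨⟨i, hiN⟩, rfl⟩
    have hsplit : a / p ^ i % p + b / p ^ i % p
        = (a / p ^ i % p + b / p ^ i % p - p) + p := (Nat.sub_add_cancel hge).symm
    have heq : (MvPolynomial.C (((a / p ^ i % p).factorial : ZMod p))⁻¹ *
          MvPolynomial.X (⟨i, hiN⟩ : Fin N) ^ (a / p ^ i % p)) *
        (MvPolynomial.C (((b / p ^ i % p).factorial : ZMod p))⁻¹ *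
          MvPolynomial.X (⟨i, hiN⟩ : Fin N) ^ (b / p ^ i % p))
        = (MvPolynomial.C (((a / p ^ i % p).factorial : ZMod p))⁻¹ *
            MvPolynomial.C (((b / p ^ i % p).factorial : ZMod p))⁻¹ *
            MvPolynomial.X (⟨i, hiN⟩ : Fin N) ^ (a / p ^ i % p + b / p ^ i % p - p)) *
          MvPolynomial.X (⟨i, hiN⟩ : Fin N) ^ p := by
      rw [mul_mul_mul_comm, ← pow_add]
      conv_lhs => rw [hsplit]
      rw [pow_add, ← mul_assoc]
    simp only [Fin.val_mk] at heq ⊢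
    rw [heq]
    exact Ideal.mul_mem_left _ _ hmem
end

section
/- Let K be a field and m ≥ 1. In the Lie algebra W = Der_K(K[x_1, …, x_m]) of K-linear derivations of the polynomial ring, call a derivation X homogeneous of degree i (for an integer i ≥ −1) if X(x_j) is homogeneous of degree i+1 for every j, and let W_i be the K-submodule of such derivations (so W_{−1} is spanned by the partial derivatives ∂_1, …, ∂_m). Let h_0 ⊆ W_0 be a Lie subalgebra and let h_1 ⊆ W_1 be a K-submodule satisfying [h_0, h_1] ⊆ h_1 and [∂_j, h_1] ⊆ h_0 for all j. Set h_{−1} = W_{−1} and define recursively for i ≥ 2: h_i = {X ∈ W_i : [∂_j, X] ∈ h_{i−1} for all j}. Then [h_i, h_j] ⊆ h_{i+j} for all i, j ≥ −1 (where h_k := 0 for k < −1); in particular, the sum ⊕_{i ≥ −1} h_i is a Lie subalgebra of W. -/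
/-!
Induction on `i + j`. For `i + j ≥ 2`, membership of `⁅x, y⁆` in `h (i + j)` is tested by
bracketing with the `∂ₖ`, and `⁅∂ₖ, ⁅x, y⁆⁆ = ⁅⁅∂ₖ, x⁆, y⁆ + ⁅x, ⁅∂ₖ, y⁆⁆` reduces it to pairs of
total degree `i + j - 1`, because `⁅∂ₖ, h i⁆ ⊆ h (i - 1)` holds in every degree: by assumption
for `i ≥ 1`, because `W` is graded for `i = 0`, and because fields with constant coefficients
commute for `i = -1`. The cases `i + j ≤ 1` are the hypotheses on `h 0` and `h 1`, together with
the fact that `W (-1)` is spanned by the `∂ₖ`.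
-/

open MvPolynomial

theorem Derivation.finset_sum_apply {R A M ι : Type*} [CommSemiring R] [CommSemiring A]
    [AddCommMonoid M] [Algebra R A] [Module A M] [Module R M] (s : Finset ι)
    (D : ι → Derivation R A M) (a : A) : (∑ i ∈ s, D i) a = ∑ i ∈ s, D i a := by
  rw [← coeFnAddMonoidHom_apply, map_sum, Finset.sum_apply]
  rfl

namespace MvPolynomial

variable {σ R : Type*}

section CommSemiring

variable [CommSemiring R]

theorem derivation_eq_zero_of_isHomogeneous_zero
    (D : Derivation R (MvPolynomial σ R) (MvPolynomial σ R)) {p : MvPolynomial σ R}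
    (hp : p.IsHomogeneous 0) : D p = 0 := by
  rw [← totalDegree_zero_iff_isHomogeneous, totalDegree_eq_zero_iff_eq_C] at hp
  rw [hp, derivation_C]

variable [Fintype σ]

theorem derivation_apply_eq_sum
    (D : Derivation R (MvPolynomial σ R) (MvPolynomial σ R)) (p : MvPolynomial σ R) :
    D p = ∑ i, D (X i) * pderiv i p := by
  classical
  suffices hD : D = ∑ i, D (X i) • pderiv i by
    conv_lhs => rw [hD, Derivation.finset_sum_apply]
    rfl
  refine derivation_ext fun j => ?_
  simp [Derivation.finset_sum_apply, Pi.single_apply]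

theorem IsHomogeneous.derivation_apply
    {D : Derivation R (MvPolynomial σ R) (MvPolynomial σ R)} {a n : ℕ}
    (hD : ∀ i, (D (X i)).IsHomogeneous a) {p : MvPolynomial σ R} (hp : p.IsHomogeneous n) :
    (D p).IsHomogeneous (a + n - 1) := by
  cases n with
  | zero => rw [derivation_eq_zero_of_isHomogeneous_zero D hp]; exact isHomogeneous_zero _ _ _
  | succ n =>
    rw [derivation_apply_eq_sum]
    exact IsHomogeneous.sum _ _ _ fun i _ => (hD i).mul hp.pderiv

end CommSemiring

variable [CommRing R]

theorem isHomogeneous_lie_apply_X [Fintype σ]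
    {D E : Derivation R (MvPolynomial σ R) (MvPolynomial σ R)} {a b : ℕ}
    (hD : ∀ i, (D (X i)).IsHomogeneous a) (hE : ∀ i, (E (X i)).IsHomogeneous b) (k : σ) :
    (⁅D, E⁆ (X k)).IsHomogeneous (a + b - 1) := by
  rw [Derivation.commutator_apply]
  exact ((hE k).derivation_apply hD).sub (add_comm b a ▸ (hD k).derivation_apply hE)

theorem lie_eq_zero_of_isHomogeneous_zero
    {D E : Derivation R (MvPolynomial σ R) (MvPolynomial σ R)}
    (hD : ∀ i, (D (X i)).IsHomogeneous 0) (hE : ∀ i, (E (X i)).IsHomogeneous 0) :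
    ⁅D, E⁆ = 0 := by
  refine derivation_ext fun k => ?_
  rw [Derivation.commutator_apply, derivation_eq_zero_of_isHomogeneous_zero D (hE k),
    derivation_eq_zero_of_isHomogeneous_zero E (hD k), sub_zero, Derivation.zero_apply]

end MvPolynomial

section PartialProlong

variable {σ R : Type*} [CommRing R]

def IsHomogeneousComponents
    (W : ℤ → Submodule R (Derivation R (MvPolynomial σ R) (MvPolynomial σ R))) : Prop :=
  ∀ i : ℤ, -1 ≤ i → ∀ D : Derivation R (MvPolynomial σ R) (MvPolynomial σ R),
    D ∈ W i ↔ ∀ j, (D (X j)).IsHomogeneous (i + 1).toNat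

structure IsPartialProlong
    (W h : ℤ → Submodule R (Derivation R (MvPolynomial σ R) (MvPolynomial σ R))) : Prop where
  isHomogeneousComponents : IsHomogeneousComponents W
  eq_bot : ∀ k : ℤ, k < -1 → h k = ⊥
  neg_one_eq : h (-1) = W (-1)
  zero_le : h 0 ≤ W 0
  lie_zero_zero : ∀ x ∈ h 0, ∀ y ∈ h 0, ⁅x, y⁆ ∈ h 0
  one_le : h 1 ≤ W 1
  lie_zero_one : ∀ x ∈ h 0, ∀ y ∈ h 1, ⁅x, y⁆ ∈ h 1
  pderiv_lie_one : ∀ j : σ, ∀ y ∈ h 1, ⁅pderiv (R := R) j, y⁆ ∈ h 0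
  mem_iff : ∀ i : ℤ, 2 ≤ i → ∀ D, D ∈ h i ↔ D ∈ W i ∧
    ∀ j : σ, ⁅pderiv (R := R) j, D⁆ ∈ h (i - 1)

variable {W h : ℤ → Submodule R (Derivation R (MvPolynomial σ R) (MvPolynomial σ R))}
  {D x y : Derivation R (MvPolynomial σ R) (MvPolynomial σ R)} {i j : ℤ}

namespace IsHomogeneousComponents

theorem pderiv_mem (hW : IsHomogeneousComponents W) (k : σ) : pderiv (R := R) k ∈ W (-1) := by
  refine (hW _ le_rfl _).2 fun l => ?_
  rcases eq_or_ne l k with rfl | hlk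
  · simpa using isHomogeneous_one σ R
  · simpa [pderiv_X_of_ne hlk] using isHomogeneous_zero σ R 0

theorem lie_mem [Fintype σ] (hW : IsHomogeneousComponents W) (hi : -1 ≤ i) (hj : -1 ≤ j)
    (hij : -1 ≤ i + j) (hx : x ∈ W i) (hy : y ∈ W j) : ⁅x, y⁆ ∈ W (i + j) := by
  rw [hW _ hi] at hx
  rw [hW _ hj] at hy
  refine (hW _ hij _).2 fun k => ?_
  convert isHomogeneous_lie_apply_X hx hy k using 1
  omega

theorem eq_sum_smul_pderiv [Fintype σ] (hW : IsHomogeneousComponents W) (hD : D ∈ W (-1)) :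
    D = ∑ k, coeff 0 (D (X k)) • pderiv (R := R) k := by
  rw [hW _ le_rfl] at hD
  refine derivation_ext fun l => ?_
  rw [Derivation.finset_sum_apply,
    Finset.sum_eq_single l (fun k _ hkl => by simp [pderiv_X_of_ne hkl.symm]) (by simp)]
  rw [Derivation.smul_apply, pderiv_X_self, smul_eq_C_mul, mul_one]
  exact totalDegree_eq_zero_iff_eq_C.1 ((totalDegree_zero_iff_isHomogeneous σ).2 (hD l))

theorem pderiv_lie_eq_zero [Fintype σ] (hW : IsHomogeneousComponents W) (k : σ)
    (hD : D ∈ W (-1)) : ⁅pderiv (R := R) k, D⁆ = 0 :=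
  lie_eq_zero_of_isHomogeneous_zero ((hW _ le_rfl _).1 (hW.pderiv_mem k)) ((hW _ le_rfl _).1 hD)

end IsHomogeneousComponents

namespace IsPartialProlong

theorem eq_zero_of_mem (hP : IsPartialProlong W h) (hi : i < -1) (hx : x ∈ h i) : x = 0 := by
  rwa [hP.eq_bot i hi, Submodule.mem_bot] at hx

theorem le (hP : IsPartialProlong W h) (hi : -1 ≤ i) : h i ≤ W i := by
  obtain rfl | rfl | rfl | hi : i = -1 ∨ i = 0 ∨ i = 1 ∨ 2 ≤ i := by omega
  · exact hP.neg_one_eq.le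
  · exact hP.zero_le
  · exact hP.one_le
  · exact fun D hD => ((hP.mem_iff i hi D).1 hD).1

theorem pderiv_lie_mem [Fintype σ] (hP : IsPartialProlong W h) (k : σ) (hx : x ∈ h i) :
    ⁅pderiv (R := R) k, x⁆ ∈ h (i - 1) := by
  have hW := hP.isHomogeneousComponents
  obtain hi | rfl | rfl | rfl | hi : i < -1 ∨ i = -1 ∨ i = 0 ∨ i = 1 ∨ 2 ≤ i := by omega
  · rw [hP.eq_zero_of_mem hi hx, lie_zero (pderiv (R := R) k)]
    exact zero_mem _
  · rw [hP.neg_one_eq] at hx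
    rw [hW.pderiv_lie_eq_zero k hx]
    exact zero_mem _
  · rw [zero_sub, hP.neg_one_eq]
    exact hW.lie_mem le_rfl (by norm_num) (by norm_num) (hW.pderiv_mem k) (hP.zero_le hx)
  · exact hP.pderiv_lie_one k x hx
  · exact ((hP.mem_iff i hi x).1 hx).2 k

theorem lie_mem_of_mem_neg_one [Fintype σ] (hP : IsPartialProlong W h) (hD : D ∈ W (-1))
    (hy : y ∈ h j) : ⁅D, y⁆ ∈ h (j - 1) := by
  rw [hP.isHomogeneousComponents.eq_sum_smul_pderiv hD, sum_lie _ _ y]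
  refine sum_mem fun k _ => ?_
  rw [smul_lie (coeff 0 (D (X k))) (pderiv (R := R) k) y]
  exact Submodule.smul_mem _ _ (hP.pderiv_lie_mem k hy)

theorem lie_mem_of_lt_neg_one (hP : IsPartialProlong W h) (hij : i < -1 ∨ j < -1)
    (hx : x ∈ h i) (hy : y ∈ h j) (k : ℤ) : ⁅x, y⁆ ∈ h k := by
  obtain hi | hj := hij
  · rw [hP.eq_zero_of_mem hi hx, zero_lie y]
    exact zero_mem _
  · rw [hP.eq_zero_of_mem hj hy, lie_zero x]
    exact zero_mem _

theorem lie_mem_of_add_le_one [Fintype σ] (hP : IsPartialProlong W h) (hi : -1 ≤ i) (hj : -1 ≤ j)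
    (hij : i + j ≤ 1) (hx : x ∈ h i) (hy : y ∈ h j) : ⁅x, y⁆ ∈ h (i + j) := by
  obtain rfl | hi := eq_or_lt_of_le hi
  · rw [hP.neg_one_eq] at hx
    rw [neg_add_eq_sub]
    exact hP.lie_mem_of_mem_neg_one hx hy
  obtain rfl | hj := eq_or_lt_of_le hj
  · rw [hP.neg_one_eq] at hy
    rw [← lie_skew, ← sub_eq_add_neg]
    exact neg_mem (hP.lie_mem_of_mem_neg_one hy hx)
  obtain ⟨rfl, rfl⟩ | ⟨rfl, rfl⟩ | ⟨rfl, rfl⟩ :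
      (i = 0 ∧ j = 0) ∨ (i = 0 ∧ j = 1) ∨ (i = 1 ∧ j = 0) := by
    omega
  · exact hP.lie_zero_zero x hx y hy
  · exact hP.lie_zero_one x hx y hy
  · rw [← lie_skew]
    exact neg_mem (hP.lie_zero_one y hy x hx)

theorem lie_mem_of_two_le [Fintype σ] (hP : IsPartialProlong W h) (hi : -1 ≤ i) (hj : -1 ≤ j)
    (hij : 2 ≤ i + j) (hx : x ∈ h i) (hy : y ∈ h j)
    (ih : ∀ i' j', i' + j' = i + j - 1 → ∀ x' ∈ h i', ∀ y' ∈ h j', ⁅x', y'⁆ ∈ h (i' + j')) :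
    ⁅x, y⁆ ∈ h (i + j) := by
  have hW := hP.isHomogeneousComponents
  rw [hP.mem_iff _ hij]
  refine ⟨hW.lie_mem hi hj (by omega) (hP.le hi hx) (hP.le hj hy), fun k => ?_⟩
  rw [LieRing.leibniz_lie (pderiv k) x y]
  refine add_mem ?_ ?_
  · convert ih (i - 1) j (by ring) _ (hP.pderiv_lie_mem k hx) y hy using 2
    ring
  · convert ih i (j - 1) (by ring) x hx _ (hP.pderiv_lie_mem k hy) using 2
    ring

theorem lie_mem [Fintype σ] (hP : IsPartialProlong W h) (hx : x ∈ h i) (hy : y ∈ h j) :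
    ⁅x, y⁆ ∈ h (i + j) := by
  suffices ∀ n : ℕ, ∀ i j : ℤ, i + j ≤ n + 1 → ∀ x ∈ h i, ∀ y ∈ h j, ⁅x, y⁆ ∈ h (i + j) from
    this (i + j).toNat i j (by omega) x hx y hy
  intro n
  induction n with
  | zero =>
    intro i j hij x hx y hy
    by_cases hdeg : i < -1 ∨ j < -1
    · exact hP.lie_mem_of_lt_neg_one hdeg hx hy _
    · exact hP.lie_mem_of_add_le_one (by omega) (by omega) hij hx hy
  | succ n ih =>
    intro i j hij x hx y hy
    by_cases hdeg : i < -1 ∨ j < -1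
    · exact hP.lie_mem_of_lt_neg_one hdeg hx hy _
    obtain hle | hlt := le_or_gt (i + j) (n + 1)
    · exact ih i j hle x hx y hy
    exact hP.lie_mem_of_two_le (by omega) (by omega) (by omega) hx hy
      fun i' j' h' => ih i' j' (by omega)

end IsPartialProlong

end PartialProlong

theorem partial_prolong_bracket_general (K : Type*) [Field K] (m : ℕ)
    (W : ℤ → Submodule K (Derivation K (MvPolynomial (Fin m) K) (MvPolynomial (Fin m) K)))
    (hW : ∀ i : ℤ, -1 ≤ i →
      ∀ D : Derivation K (MvPolynomial (Fin m) K) (MvPolynomial (Fin m) K),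
        D ∈ W i ↔ ∀ j : Fin m, (D (X j)).IsHomogeneous (i + 1).toNat)
    (h : ℤ → Submodule K (Derivation K (MvPolynomial (Fin m) K) (MvPolynomial (Fin m) K)))
    (hbot : ∀ k : ℤ, k < -1 → h k = ⊥)
    (hm1 : h (-1) = W (-1))
    (h0W : h 0 ≤ W 0)
    (h0lie : ∀ x ∈ h 0, ∀ y ∈ h 0, ⁅x, y⁆ ∈ h 0)
    (h1W : h 1 ≤ W 1)
    (h01 : ∀ x ∈ h 0, ∀ y ∈ h 1, ⁅x, y⁆ ∈ h 1)
    (hpd1 : ∀ j : Fin m, ∀ y ∈ h 1,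
      ⁅(pderiv j : Derivation K (MvPolynomial (Fin m) K) (MvPolynomial (Fin m) K)), y⁆ ∈ h 0)
    (hrec : ∀ i : ℤ, 2 ≤ i →
      ∀ D : Derivation K (MvPolynomial (Fin m) K) (MvPolynomial (Fin m) K),
        D ∈ h i ↔ D ∈ W i ∧ ∀ j : Fin m,
          ⁅(pderiv j : Derivation K (MvPolynomial (Fin m) K) (MvPolynomial (Fin m) K)), D⁆
            ∈ h (i - 1)) :
    ∀ i j : ℤ, -1 ≤ i → -1 ≤ j → ∀ x ∈ h i, ∀ y ∈ h j, ⁅x, y⁆ ∈ h (i + j) := by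
  have hP : IsPartialProlong W h := ⟨hW, hbot, hm1, h0W, h0lie, h1W, h01, hpd1, hrec⟩
  exact fun _ _ _ _ _ hx _ hy => hP.lie_mem hx hy

/-- The Shchepochkina partial prolong `⊕_{i ≥ -1} h_i` is closed under the Lie bracket of the
Lie algebra `W = Der_K(K[x_1, …, x_m])` of polynomial vector fields.  Here `W i` is the
submodule of derivations homogeneous of degree `i` (sending each variable to a homogeneous
polynomial of degree `i+1`), `h (-1) = W (-1)` (spanned by the partial derivatives),
`h 0 ⊆ W 0` is a Lie subalgebra, `h 1 ⊆ W 1` is a submodule with `[h 0, h 1] ⊆ h 1` and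
`[∂_j, h 1] ⊆ h 0`, and for `i ≥ 2` the components are defined recursively by
`h i = {X ∈ W i : [∂_j, X] ∈ h (i-1) for all j}`; `h k = 0` for `k < -1`.
Then `[h i, h j] ⊆ h (i+j)` for all `i, j ≥ -1`. -/
theorem partial_prolong_bracket (K : Type*) [Field K] (m : ℕ) (hm : 1 ≤ m)
    (W : ℤ → Submodule K (Derivation K (MvPolynomial (Fin m) K) (MvPolynomial (Fin m) K)))
    (hW : ∀ i : ℤ, -1 ≤ i →
      ∀ D : Derivation K (MvPolynomial (Fin m) K) (MvPolynomial (Fin m) K),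
        D ∈ W i ↔ ∀ j : Fin m, (D (X j)).IsHomogeneous (i + 1).toNat)
    (h : ℤ → Submodule K (Derivation K (MvPolynomial (Fin m) K) (MvPolynomial (Fin m) K)))
    (hbot : ∀ k : ℤ, k < -1 → h k = ⊥)
    (hm1 : h (-1) = W (-1))
    (h0W : h 0 ≤ W 0)
    (h0lie : ∀ x ∈ h 0, ∀ y ∈ h 0, ⁅x, y⁆ ∈ h 0)
    (h1W : h 1 ≤ W 1)
    (h01 : ∀ x ∈ h 0, ∀ y ∈ h 1, ⁅x, y⁆ ∈ h 1)
    (hpd1 : ∀ j : Fin m, ∀ y ∈ h 1,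
      ⁅(pderiv j : Derivation K (MvPolynomial (Fin m) K) (MvPolynomial (Fin m) K)), y⁆ ∈ h 0)
    (hrec : ∀ i : ℤ, 2 ≤ i →
      ∀ D : Derivation K (MvPolynomial (Fin m) K) (MvPolynomial (Fin m) K),
        D ∈ h i ↔ D ∈ W i ∧ ∀ j : Fin m,
          ⁅(pderiv j : Derivation K (MvPolynomial (Fin m) K) (MvPolynomial (Fin m) K)), D⁆
            ∈ h (i - 1)) :
    ∀ i j : ℤ, -1 ≤ i → -1 ≤ j → ∀ x ∈ h i, ∀ y ∈ h j, ⁅x, y⁆ ∈ h (i + j) :=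
  partial_prolong_bracket_general K m W hW h hbot hm1 h0W h0lie h1W h01 hpd1 hrec
end
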